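/- arXiv:2208.03882 — 5 statements merged into one kernel-verified Lean document; each statement's English description precedes it below -/
import Mathlib

section
/- Let n ≥ 3 be odd and s real. Then the product ∏_{k=0}^{(n−3)/2} (1 + s²n²/(4(2k+1)²))^{1/2} is at most (cosh(πsn/4))^{1/2}, and hence at most e^{π|s|n/8}. -/
/-!
Euler's sine product gives `cos (π z) = sin (2π z) / (2 sin (π z)) = ∏_{k ≥ 0} (1 - 4z²/(2k+1)²)`,
since the factors of `sin (2π z)` with even index are exactly those of `sin (π z)`.
At `z = i y / 2` this reads `cosh (π y / 2) = ∏_{k ≥ 0} (1 + y²/(2k+1)²)`, a product of factors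
`≥ 1`, so every partial product is below `cosh (π y / 2)`. Finally `cosh x ≤ e^{|x|}`.
-/

open Real Finset Filter Topology

namespace Complex

theorem prod_range_two_mul_one_sub_sq_div (z : ℂ) (N : ℕ) :
    ∏ j ∈ range (2 * N), (1 - (2 * z) ^ 2 / ((j : ℂ) + 1) ^ 2) =
      (∏ k ∈ range N, (1 - 4 * z ^ 2 / (2 * (k : ℂ) + 1) ^ 2)) *
        ∏ j ∈ range N, (1 - z ^ 2 / ((j : ℂ) + 1) ^ 2) := by
  induction N with
  | zero => simp
  | succ N ih =>
    rw [show 2 * (N + 1) = 2 * N + 1 + 1 by ring, prod_range_succ, prod_range_succ, ih,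
      prod_range_succ, prod_range_succ]
    push_cast
    rw [show (2 * (N : ℂ) + 1 + 1) = 2 * (N + 1) by ring, mul_pow 2 z, mul_pow 2 ((N : ℂ) + 1),
      mul_div_mul_left _ _ (pow_ne_zero 2 two_ne_zero)]
    ring

theorem tendsto_euler_cos_prod {z : ℂ} (hz : sin (π * z) ≠ 0) :
    Tendsto (fun N : ℕ => ∏ k ∈ range N, (1 - 4 * z ^ 2 / (2 * (k : ℂ) + 1) ^ 2)) atTop
      (𝓝 (cos (π * z))) := by
  set P := fun N : ℕ => ∏ k ∈ range N, (1 - 4 * z ^ 2 / (2 * (k : ℂ) + 1) ^ 2)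
  set a := fun N : ℕ => 2 * (π * z * ∏ j ∈ range N, (1 - z ^ 2 / ((j : ℂ) + 1) ^ 2))
  have ha : Tendsto a atTop (𝓝 (2 * sin (π * z))) := (tendsto_euler_sin_prod z).const_mul 2
  have hPa : Tendsto (fun N => P N * a N) atTop (𝓝 (sin (π * (2 * z)))) := by
    have h := (tendsto_euler_sin_prod (2 * z)).comp (tendsto_id.const_mul_atTop' two_pos)
    refine h.congr fun N => ?_
    simp only [Function.comp_apply, id, prod_range_two_mul_one_sub_sq_div, P, a]
    ring
  have hlim : sin (π * (2 * z)) / (2 * sin (π * z)) = cos (π * z) := by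
    rw [mul_left_comm, sin_two_mul]; field_simp
  rw [← hlim]
  refine (hPa.div ha (mul_ne_zero two_ne_zero hz)).congr' ?_
  filter_upwards [ha.eventually_ne (mul_ne_zero two_ne_zero hz)] with N hN
  exact mul_div_cancel_right₀ _ hN

end Complex

namespace Real

theorem tendsto_prod_one_add_sq_div_odd_sq (y : ℝ) :
    Tendsto (fun N : ℕ => ∏ k ∈ range N, (1 + y ^ 2 / (2 * (k : ℝ) + 1) ^ 2)) atTop
      (𝓝 (cosh (π * y / 2))) := by
  rcases eq_or_ne y 0 with rfl | hy
  · simp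
  have hsin : Complex.sin (π * (y / 2 * Complex.I)) ≠ 0 := by
    rw [← mul_assoc, Complex.sin_mul_I]
    refine mul_ne_zero ?_ Complex.I_ne_zero
    exact_mod_cast sinh_ne_zero.2 (mul_ne_zero pi_ne_zero (div_ne_zero hy two_ne_zero))
  have hterm (k : ℕ) : 1 - 4 * ((y : ℂ) / 2 * Complex.I) ^ 2 / (2 * (k : ℂ) + 1) ^ 2 =
      ((1 + y ^ 2 / (2 * (k : ℝ) + 1) ^ 2 : ℝ) : ℂ) := by
    push_cast
    rw [mul_pow, Complex.I_sq]
    ring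
  have hcos : Complex.cos (π * ((y : ℂ) / 2 * Complex.I)) = (cosh (π * y / 2) : ℂ) := by
    rw [← mul_assoc, Complex.cos_mul_I]
    push_cast
    ring_nf
  have h := Complex.tendsto_euler_cos_prod hsin
  simp_rw [hterm, ← Complex.ofReal_prod, hcos] at h
  exact (Complex.continuous_re.tendsto _).comp h

theorem prod_one_add_sq_div_odd_sq_le_cosh (y : ℝ) (N : ℕ) :
    ∏ k ∈ range N, (1 + y ^ 2 / (2 * (k : ℝ) + 1) ^ 2) ≤ cosh (π * y / 2) := by
  refine Monotone.ge_of_tendsto (monotone_nat_of_le_succ fun M => ?_)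
    (tendsto_prod_one_add_sq_div_odd_sq y) N
  rw [prod_range_succ]
  exact le_mul_of_one_le_right (prod_nonneg fun k _ => by positivity)
    (le_add_of_nonneg_right (by positivity))

theorem cosh_le_exp_abs (x : ℝ) : cosh x ≤ exp |x| := by
  rw [← cosh_abs, cosh_eq]
  have : exp (-|x|) ≤ exp |x| := exp_le_exp.2 (by linarith [abs_nonneg x])
  linarith

theorem sqrt_cosh_le_exp_abs_div_two (x : ℝ) : √(cosh x) ≤ exp (|x| / 2) := by
  rw [exp_half]
  exact sqrt_le_sqrt (cosh_le_exp_abs x)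

end Real

theorem odd_case_product_bound_general (n : ℕ) (s : ℝ) :
    (∏ k ∈ Finset.range ((n - 3) / 2 + 1),
        Real.sqrt (1 + s ^ 2 * (n : ℝ) ^ 2 / (4 * (2 * (k : ℝ) + 1) ^ 2)) ≤
      Real.sqrt (Real.cosh (π * s * n / 4))) ∧
    Real.sqrt (Real.cosh (π * s * n / 4)) ≤ Real.exp (π * |s| * n / 8) := by
  have hfactor (k : ℕ) : s ^ 2 * (n : ℝ) ^ 2 / (4 * (2 * (k : ℝ) + 1) ^ 2) =
      (s * n / 2) ^ 2 / (2 * (k : ℝ) + 1) ^ 2 := by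
    rw [div_pow, div_div]; ring
  refine ⟨?_, ?_⟩
  · rw [← Real.sqrt_prod _ fun k _ => by positivity]
    refine Real.sqrt_le_sqrt ?_
    simpa only [hfactor, show π * s * n / 4 = π * (s * n / 2) / 2 by ring] using
      Real.prod_one_add_sq_div_odd_sq_le_cosh (s * n / 2) _
  · calc √(cosh (π * s * n / 4)) ≤ exp (|π * s * n / 4| / 2) :=
          Real.sqrt_cosh_le_exp_abs_div_two _
      _ = exp (π * |s| * n / 8) := by
        rw [abs_div, abs_mul, abs_mul, abs_of_pos pi_pos, Nat.abs_cast]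
        ring_nf

/-- For odd `n ≥ 3`,
`∏_{k=0}^{(n−3)/2} (1 + s²n²/(4(2k+1)²))^{1/2} ≤ (cosh(πsn/4))^{1/2} ≤ e^{π|s|n/8}`. -/
theorem odd_case_product_bound (n : ℕ) (hn : 3 ≤ n) (hodd : Odd n) (s : ℝ) :
    (∏ k ∈ Finset.range ((n - 3) / 2 + 1),
        Real.sqrt (1 + s ^ 2 * (n : ℝ) ^ 2 / (4 * (2 * (k : ℝ) + 1) ^ 2)) ≤
      Real.sqrt (Real.cosh (π * s * n / 4))) ∧
    Real.sqrt (Real.cosh (π * s * n / 4)) ≤ Real.exp (π * |s| * n / 8) :=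
  odd_case_product_bound_general n s
end

section
/- Let n ≥ 2 be even and s a nonzero real. Then √π · (sn/4 · coth(πsn/4))^{1/2} · ∏_{k=1}^{(n−2)/2} (1 + n²s²/(4(2k)²))^{1/2} ≤ (cosh(πsn/4))^{1/2} ≤ e^{π|s|n/8}. -/
/-!
Euler's product `sinh (π x) = π x ∏_{k ≥ 1} (1 + x² / k²)` has factors `≥ 1`, so every finite
partial product is at most `sinh (π x) / (π x)`. With `x = s n / 4` the factors are exactly those
of the statement, and multiplying by `π x coth (π x)` turns the bound into `cosh (π x)`. The
second inequality is `cosh y ≤ exp |y|`.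
-/

open Real Finset Filter Topology

namespace Real

theorem tendsto_euler_sinh_prod (x : ℝ) :
    Tendsto (fun N : ℕ => π * x * ∏ k ∈ Icc 1 N, (1 + x ^ 2 / (k : ℝ) ^ 2))
      atTop (𝓝 (sinh (π * x))) := by
  have h := (Complex.tendsto_euler_sin_prod (x * Complex.I)).mul_const (-Complex.I)
  have hsin : Complex.sin (π * (x * Complex.I)) * -Complex.I = (sinh (π * x) : ℂ) := by
    rw [← mul_assoc, ← Complex.ofReal_mul, Complex.sin_mul_I, Complex.ofReal_sinh]
    linear_combination (-Complex.sinh (π * x : ℝ)) * Complex.I_sq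
  rw [hsin] at h
  rw [← Filter.tendsto_ofReal_iff]
  convert h using 2 with N
  rw [← Finset.Ico_add_one_right_eq_Icc, Finset.range_eq_Ico, ← Finset.prod_Ico_add' _ 0 N 1]
  push_cast
  ring_nf
  rw [Complex.I_sq]
  ring_nf

theorem prod_one_add_sq_div_sq_le_sinh_div {x : ℝ} (hx : x ≠ 0) (M : ℕ) :
    ∏ k ∈ Icc 1 M, (1 + x ^ 2 / (k : ℝ) ^ 2) ≤ sinh (π * x) / (π * x) := by
  have hπx : π * x ≠ 0 := mul_ne_zero pi_ne_zero hx
  have hlim : Tendsto (fun N : ℕ => ∏ k ∈ Icc 1 N, (1 + x ^ 2 / (k : ℝ) ^ 2))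
      atTop (𝓝 (sinh (π * x) / (π * x))) := by
    simpa [mul_div_cancel_left₀ _ hπx] using (tendsto_euler_sinh_prod x).div_const (π * x)
  refine (monotone_nat_of_le_succ fun N => ?_).ge_of_tendsto hlim M
  rw [Finset.prod_Icc_succ_top (Nat.le_add_left 1 N)]
  exact le_mul_of_one_le_right (prod_nonneg fun k _ => by positivity)
    (le_add_of_nonneg_right (by positivity))

theorem mul_cosh_div_sinh_nonneg {c : ℝ} (hc : 0 ≤ c) (x : ℝ) :
    0 ≤ x * (cosh (c * x) / sinh (c * x)) := by
  rcases le_total 0 x with h | h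
  · exact mul_nonneg h (div_nonneg (cosh_pos _).le (sinh_nonneg_iff.2 (mul_nonneg hc h)))
  · exact mul_nonneg_of_nonpos_of_nonpos h
      (div_nonpos_of_nonneg_of_nonpos (cosh_pos _).le
        (sinh_nonpos_iff.2 (mul_nonpos_of_nonneg_of_nonpos hc h)))

theorem pi_mul_mul_coth_mul_prod_le_cosh {x : ℝ} (hx : x ≠ 0) (M : ℕ) :
    π * (x * (cosh (π * x) / sinh (π * x))) * ∏ k ∈ Icc 1 M, (1 + x ^ 2 / (k : ℝ) ^ 2) ≤
      cosh (π * x) := by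
  have hπx : π * x ≠ 0 := mul_ne_zero pi_ne_zero hx
  have hsinh : sinh (π * x) ≠ 0 := sinh_ne_zero.2 hπx
  calc π * (x * (cosh (π * x) / sinh (π * x))) * ∏ k ∈ Icc 1 M, (1 + x ^ 2 / (k : ℝ) ^ 2)
      ≤ π * (x * (cosh (π * x) / sinh (π * x))) * (sinh (π * x) / (π * x)) :=
        mul_le_mul_of_nonneg_left (prod_one_add_sq_div_sq_le_sinh_div hx M)
          (mul_nonneg pi_pos.le (mul_cosh_div_sinh_nonneg pi_pos.le x))
    _ = cosh (π * x) := by field_simp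

end Real

theorem even_case_product_bound_general (n : ℕ) (hn : 2 ≤ n) (s : ℝ) (hs : s ≠ 0) :
    (Real.sqrt π *
        Real.sqrt (s * n / 4 * (Real.cosh (π * s * n / 4) / Real.sinh (π * s * n / 4))) *
        ∏ k ∈ Finset.Icc 1 ((n - 2) / 2),
          Real.sqrt (1 + (n : ℝ) ^ 2 * s ^ 2 / (4 * (2 * (k : ℝ)) ^ 2)) ≤
      Real.sqrt (Real.cosh (π * s * n / 4))) ∧
    Real.sqrt (Real.cosh (π * s * n / 4)) ≤ Real.exp (π * |s| * n / 8) := by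
  set x : ℝ := s * n / 4 with hx_def
  have hx : x ≠ 0 := div_ne_zero (mul_ne_zero hs (Nat.cast_ne_zero.2 (by omega))) four_ne_zero
  have harg : π * s * n / 4 = π * x := by ring
  have hfactor (k : ℕ) :
      1 + (n : ℝ) ^ 2 * s ^ 2 / (4 * (2 * (k : ℝ)) ^ 2) = 1 + x ^ 2 / (k : ℝ) ^ 2 := by
    ring
  rw [harg]
  constructor
  · simp only [hfactor]
    rw [← sqrt_prod _ fun k _ => by positivity, ← sqrt_mul pi_pos.le,
      ← sqrt_mul (mul_nonneg pi_pos.le (mul_cosh_div_sinh_nonneg pi_pos.le x))]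
    exact sqrt_le_sqrt (pi_mul_mul_coth_mul_prod_le_cosh hx _)
  · calc √(cosh (π * x)) ≤ √(exp |π * x|) := sqrt_le_sqrt (cosh_le_exp_abs _)
      _ = exp (π * |s| * n / 8) := by
        rw [← exp_half, abs_mul, abs_of_pos pi_pos, hx_def, abs_div, abs_mul, Nat.abs_cast]
        ring_nf

/-- For even `n ≥ 2` and `s ≠ 0`,
`√π (sn/4 · coth(πsn/4))^{1/2} ∏_{k=1}^{(n−2)/2} (1 + n²s²/(4(2k)²))^{1/2}
  ≤ (cosh(πsn/4))^{1/2} ≤ e^{π|s|n/8}`. -/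
theorem even_case_product_bound (n : ℕ) (hn : 2 ≤ n) (heven : Even n) (s : ℝ) (hs : s ≠ 0) :
    (Real.sqrt π *
        Real.sqrt (s * n / 4 * (Real.cosh (π * s * n / 4) / Real.sinh (π * s * n / 4))) *
        ∏ k ∈ Finset.Icc 1 ((n - 2) / 2),
          Real.sqrt (1 + (n : ℝ) ^ 2 * s ^ 2 / (4 * (2 * (k : ℝ)) ^ 2)) ≤
      Real.sqrt (Real.cosh (π * s * n / 4))) ∧
    Real.sqrt (Real.cosh (π * s * n / 4)) ≤ Real.exp (π * |s| * n / 8) :=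
  even_case_product_bound_general n hn s hs
end

section
/- Let T be an invertible linear map on ℝⁿ and K an origin-symmetric star body, and 0 < p < n with p not an even integer. Define L_K by ‖θ‖_{L_K}^{−p} = |(‖·‖_K^{−n+p})^∧(θ)| for θ ∈ S^{n−1} (Fourier transform in the distributional sense). Then ∫_{S^{n−1}} |(‖·‖_{TK}^{−n+p})^∧(θ)|^{n/p} dθ = |det T|^{n/p − 1} · ∫_{S^{n−1}} |(‖·‖_K^{−n+p})^∧(θ)|^{n/p} dθ. -/
/-!
Let `F ≥ 0` be homogeneous of degree `-n` on `ℝⁿ` and `B` injective linear. In polar coordinates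
the integrand of `∫ F(x) 1_{(1,2)}(‖Bx‖) dx` is `F(θ) r⁻¹ 1_{(1,2)}(r‖Bθ‖)` along the ray through
`θ`, and since `dr/r` is scale invariant the integral equals `log 2 · ∫_{S^{n-1}} F`, whatever `B`
is. Computing `∫ F(Ax) 1_{(1,2)}(‖x‖) dx` once this way and once after the substitution `y = Ax`
gives `∫_{S^{n-1}} F ∘ A = |det A|⁻¹ ∫_{S^{n-1}} F`. The theorem is this identity for
`F = |g|^{n/p}` and `A = Tᵗ`, whose determinant is `det T`.
-/

open MeasureTheory Measure Set Module Real Metric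
open scoped ENNReal

theorem lintegral_Ioi_inv_mul_indicator_Ioo_one_two {a : ℝ} (ha : 0 < a) :
    ∫⁻ r in Ioi (0 : ℝ), ENNReal.ofReal r⁻¹ * (Ioo (1 : ℝ) 2).indicator 1 (a * r) =
      ENNReal.ofReal (log 2) := by
  have hpos : 0 < 1 / a := by positivity
  have hlt : 1 / a < 2 / a := div_lt_div_of_pos_right one_lt_two ha
  have hsub : Ioo (1 / a) (2 / a) ⊆ Ioi 0 := fun r hr => hpos.trans hr.1
  have hcut : ∀ r, ENNReal.ofReal r⁻¹ * (Ioo (1 : ℝ) 2).indicator 1 (a * r) =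
      (Ioo (1 / a) (2 / a)).indicator (fun r => ENNReal.ofReal r⁻¹) r := by
    intro r
    rw [← indicator_comp_right (a * ·), preimage_const_mul_Ioo₀ _ _ ha]
    simp [indicator_apply]
  have hint : IntegrableOn (fun r : ℝ => r⁻¹) (Ioo (1 / a) (2 / a)) := by
    refine (ContinuousOn.integrableOn_Icc ?_).mono_set Ioo_subset_Icc_self
    exact continuousOn_inv₀.mono fun r hr => (hpos.trans_le hr.1).ne'
  simp_rw [hcut]
  rw [lintegral_indicator measurableSet_Ioo, restrict_restrict measurableSet_Ioo,
    inter_eq_self_of_subset_left hsub, ← ofReal_integral_eq_lintegral_ofReal hint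
      (ae_restrict_of_forall_mem measurableSet_Ioo fun r hr => inv_nonneg.2 (hpos.trans hr.1).le),
    ← integral_Ioc_eq_integral_Ioo, ← intervalIntegral.integral_of_le hlt.le,
    integral_inv_of_pos hpos (hpos.trans hlt)]
  congr 2
  field_simp

section Homogeneous

variable {E : Type*} [NormedAddCommGroup E] [NormedSpace ℝ E] [FiniteDimensional ℝ E]
  [MeasurableSpace E] [BorelSpace E] (μ : Measure E) [μ.IsAddHaarMeasure]

theorem lintegral_eq_lintegral_toSphere_lintegral_Ioi [Nontrivial E] {f : E → ℝ≥0∞}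
    (hf : Measurable f) :
    ∫⁻ x, f x ∂μ = ∫⁻ θ, (∫⁻ r in Ioi (0 : ℝ),
      ENNReal.ofReal (r ^ (finrank ℝ E - 1)) * f (r • (θ : E))) ∂μ.toSphere := by
  have hf' : Measurable fun p : sphere (0 : E) 1 × Ioi (0 : ℝ) => f (p.2.1 • p.1.1) :=
    hf.comp (by fun_prop)
  calc ∫⁻ x, f x ∂μ = ∫⁻ x : ({0}ᶜ : Set E), f x ∂μ.comap (↑) := by
        rw [lintegral_subtype_comap (measurableSet_singleton _).compl, restrict_compl_singleton]
    _ = ∫⁻ p, f (p.2.1 • p.1.1) ∂μ.toSphere.prod (volumeIoiPow (finrank ℝ E - 1)) := by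
        rw [← (μ.measurePreserving_homeomorphUnitSphereProd).lintegral_comp hf']
        refine lintegral_congr fun x => ?_
        simp [smul_inv_smul₀ (norm_ne_zero_iff.2 x.2)]
    _ = _ := by
        rw [lintegral_prod _ hf'.aemeasurable]
        refine lintegral_congr fun θ => ?_
        have hfθ : Measurable fun r : Ioi (0 : ℝ) => f (r.1 • θ.1) := hf.comp (by fun_prop)
        rw [volumeIoiPow, lintegral_withDensity_eq_lintegral_mul _ (by fun_prop) hfθ,
          ← lintegral_subtype_comap measurableSet_Ioi]
        rfl

theorem lintegral_mul_indicator_norm_of_homogeneous [Nontrivial E] {F : E → ℝ≥0∞}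
    (hF : Measurable F)
    (hhom : ∀ c : ℝ, 0 < c → ∀ x, F (c • x) = ENNReal.ofReal (c ^ finrank ℝ E)⁻¹ * F x)
    {G : Type*} [NormedAddCommGroup G] [NormedSpace ℝ G] {B : E →ₗ[ℝ] G}
    (hB : Function.Injective B) :
    ∫⁻ x, F x * (Ioo (1 : ℝ) 2).indicator 1 ‖B x‖ ∂μ =
      ENNReal.ofReal (log 2) * ∫⁻ θ, F θ ∂μ.toSphere := by
  have hBc : Continuous B := B.continuous_of_finiteDimensional
  have hcut : Measurable fun x => F x * (Ioo (1 : ℝ) 2).indicator 1 ‖B x‖ :=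
    hF.mul ((measurable_one.indicator measurableSet_Ioo).comp hBc.norm.measurable)
  rw [lintegral_eq_lintegral_toSphere_lintegral_Ioi μ hcut,
    ← lintegral_const_mul' _ _ ENNReal.ofReal_ne_top]
  refine lintegral_congr fun θ => ?_
  have hBθ : 0 < ‖B θ‖ :=
    norm_pos_iff.2 ((map_ne_zero_iff B hB).2 (ne_of_mem_sphere θ.2 one_ne_zero))
  have hdim : finrank ℝ E ≠ 0 := finrank_pos.ne'
  calc ∫⁻ r in Ioi (0 : ℝ), ENNReal.ofReal (r ^ (finrank ℝ E - 1)) *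
        (F (r • (θ : E)) * (Ioo (1 : ℝ) 2).indicator 1 ‖B (r • (θ : E))‖)
      = ∫⁻ r in Ioi (0 : ℝ),
          F θ * (ENNReal.ofReal r⁻¹ * (Ioo (1 : ℝ) 2).indicator 1 (‖B θ‖ * r)) := by
        refine setLIntegral_congr_fun measurableSet_Ioi fun r (hr : 0 < r) => ?_
        have hpow : r ^ (finrank ℝ E - 1) * (r ^ finrank ℝ E)⁻¹ = r⁻¹ := by
          rw [← pow_sub_one_mul hdim r]
          field_simp
        rw [hhom r hr, B.map_smul, norm_smul, norm_of_nonneg hr.le, mul_comm r, ← hpow,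
          ENNReal.ofReal_mul (by positivity)]
        ring
    _ = F θ * ENNReal.ofReal (log 2) := by
        have hψ : Measurable fun r : ℝ =>
            ENNReal.ofReal r⁻¹ * (Ioo (1 : ℝ) 2).indicator 1 (‖B θ‖ * r) := by
          measurability
        rw [lintegral_const_mul _ hψ, lintegral_Ioi_inv_mul_indicator_Ioo_one_two hBθ]
    _ = _ := mul_comm _ _

theorem lintegral_toSphere_comp_of_homogeneous {F : E → ℝ≥0∞} (hF : Measurable F)
    (hhom : ∀ c : ℝ, 0 < c → ∀ x, F (c • x) = ENNReal.ofReal (c ^ finrank ℝ E)⁻¹ * F x)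
    {A : E →ₗ[ℝ] E} (hA : LinearMap.det A ≠ 0) :
    ∫⁻ θ, F (A θ) ∂μ.toSphere = ENNReal.ofReal |LinearMap.det A|⁻¹ * ∫⁻ θ, F θ ∂μ.toSphere := by
  rcases subsingleton_or_nontrivial E with hE | hE
  · simp [(toSphere_eq_zero_iff μ).2 hE]
  let e := A.equivOfDetNeZero hA
  have hAc : Continuous A := A.continuous_of_finiteDimensional
  have hFA : Measurable fun x => F (A x) := hF.comp hAc.measurable
  have hFAhom : ∀ c : ℝ, 0 < c → ∀ x,
      F (A (c • x)) = ENNReal.ofReal (c ^ finrank ℝ E)⁻¹ * F (A x) := by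
    intro c hc x
    rw [A.map_smul, hhom c hc]
  have hcut : Measurable fun y => F y * (Ioo (1 : ℝ) 2).indicator 1 ‖e.symm y‖ := by
    have : Continuous e.symm := e.symm.toLinearMap.continuous_of_finiteDimensional
    measurability
  refine (ENNReal.mul_right_inj (ENNReal.ofReal_pos.2 (log_pos one_lt_two)).ne'
    ENNReal.ofReal_ne_top).1 ?_
  calc ENNReal.ofReal (log 2) * ∫⁻ θ, F (A θ) ∂μ.toSphere
      = ∫⁻ x, F (A x) * (Ioo (1 : ℝ) 2).indicator 1 ‖x‖ ∂μ :=
        (lintegral_mul_indicator_norm_of_homogeneous μ hFA hFAhom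
          (B := LinearMap.id) Function.injective_id).symm
    _ = ∫⁻ x, F (A x) * (Ioo (1 : ℝ) 2).indicator 1 ‖e.symm (A x)‖ ∂μ := by
        simp_rw [show ∀ x, e.symm (A x) = x from e.symm_apply_apply]
    _ = ∫⁻ y, F y * (Ioo (1 : ℝ) 2).indicator 1 ‖e.symm y‖ ∂μ.map A :=
        (lintegral_map hcut hAc.measurable).symm
    _ = ENNReal.ofReal |LinearMap.det A|⁻¹ * (ENNReal.ofReal (log 2) * ∫⁻ θ, F θ ∂μ.toSphere) := by
        rw [map_linearMap_addHaar_eq_smul_addHaar μ hA, lintegral_smul_measure, abs_inv,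
          smul_eq_mul]
        exact congrArg _ (lintegral_mul_indicator_norm_of_homogeneous μ hF hhom e.symm.injective)
    _ = _ := mul_left_comm _ _ _

theorem integral_toSphere_comp_of_homogeneous {F : E → ℝ} (hF : Measurable F) (hF₀ : 0 ≤ F)
    (hhom : ∀ c : ℝ, 0 < c → ∀ x, F (c • x) = (c ^ finrank ℝ E)⁻¹ * F x)
    {A : E →ₗ[ℝ] E} (hA : LinearMap.det A ≠ 0) :
    ∫ θ, F (A θ) ∂μ.toSphere = |LinearMap.det A|⁻¹ * ∫ θ, F θ ∂μ.toSphere := by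
  have hhom' : ∀ c : ℝ, 0 < c → ∀ x,
      ENNReal.ofReal (F (c • x)) = ENNReal.ofReal (c ^ finrank ℝ E)⁻¹ * ENNReal.ofReal (F x) := by
    intro c hc x
    rw [hhom c hc, ENNReal.ofReal_mul (by positivity)]
  have hAm : Measurable A := A.continuous_of_finiteDimensional.measurable
  rw [integral_eq_lintegral_of_nonneg_ae (f := fun θ : sphere (0 : E) 1 => F (A θ))
      (.of_forall fun _ => hF₀ _)
      (hF.comp (hAm.comp measurable_subtype_coe)).aestronglyMeasurable,
    integral_eq_lintegral_of_nonneg_ae (f := fun θ : sphere (0 : E) 1 => F θ)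
      (.of_forall fun _ => hF₀ _)
      (hF.comp measurable_subtype_coe).aestronglyMeasurable,
    lintegral_toSphere_comp_of_homogeneous μ hF.ennreal_ofReal hhom' hA, ENNReal.toReal_mul,
    ENNReal.toReal_ofReal (by positivity)]

end Homogeneous

theorem abs_rpow_div_of_homogeneous {V : Type*} [SMul ℝ V] {g : V → ℝ} {p : ℝ} (hp : p ≠ 0)
    (hg : ∀ c : ℝ, 0 < c → ∀ x, g (c • x) = c ^ (-p) * g x) (k : ℕ) {c : ℝ} (hc : 0 < c)
    (x : V) : |g (c • x)| ^ ((k : ℝ) / p) = (c ^ k)⁻¹ * |g x| ^ ((k : ℝ) / p) := by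
  have hexp : -p * ((k : ℝ) / p) = -k := by field_simp
  rw [hg c hc, abs_mul, abs_of_pos (rpow_pos_of_pos hc _), mul_rpow (by positivity)
    (abs_nonneg _), ← rpow_mul hc.le, hexp, rpow_neg hc.le, rpow_natCast]

theorem LinearMap.det_adjoint {𝕜 E : Type*} [RCLike 𝕜] [NormedAddCommGroup E]
    [InnerProductSpace 𝕜 E] [FiniteDimensional 𝕜 E] (f : E →ₗ[𝕜] E) :
    LinearMap.det (LinearMap.adjoint f) = star (LinearMap.det f) := by
  let b := stdOrthonormalBasis 𝕜 E
  rw [← LinearMap.det_toMatrix b.toBasis, ← LinearMap.det_toMatrix b.toBasis,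
    LinearMap.toMatrix_adjoint, Matrix.det_conjTranspose]

theorem fourier_integral_linear_invariance_general (n : ℕ) (p : ℝ)
    (hp : 0 < p)
    (T : EuclideanSpace ℝ (Fin n) ≃L[ℝ] EuclideanSpace ℝ (Fin n))
    (g : EuclideanSpace ℝ (Fin n) → ℝ)
    (hgc : ContinuousOn g {(0 : EuclideanSpace ℝ (Fin n))}ᶜ)
    (hghom : ∀ c : ℝ, 0 < c → ∀ x, g (c • x) = c ^ (-p) * g x) :
    ∫ θ : Metric.sphere (0 : EuclideanSpace ℝ (Fin n)) 1,
        |LinearMap.det ((T : EuclideanSpace ℝ (Fin n) →L[ℝ] EuclideanSpace ℝ (Fin n)) :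
            EuclideanSpace ℝ (Fin n) →ₗ[ℝ] EuclideanSpace ℝ (Fin n)) *
          g ((ContinuousLinearMap.adjoint
              (T : EuclideanSpace ℝ (Fin n) →L[ℝ] EuclideanSpace ℝ (Fin n)))
            (θ : EuclideanSpace ℝ (Fin n)))| ^ ((n : ℝ) / p)
      ∂((volume : Measure (EuclideanSpace ℝ (Fin n))).toSphere) =
    |LinearMap.det ((T : EuclideanSpace ℝ (Fin n) →L[ℝ] EuclideanSpace ℝ (Fin n)) :
        EuclideanSpace ℝ (Fin n) →ₗ[ℝ] EuclideanSpace ℝ (Fin n))| ^ ((n : ℝ) / p - 1) *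
      ∫ θ : Metric.sphere (0 : EuclideanSpace ℝ (Fin n)) 1,
        |g (θ : EuclideanSpace ℝ (Fin n))| ^ ((n : ℝ) / p)
      ∂((volume : Measure (EuclideanSpace ℝ (Fin n))).toSphere) := by
  set d := LinearMap.det ((T : EuclideanSpace ℝ (Fin n) →L[ℝ] EuclideanSpace ℝ (Fin n)) :
    EuclideanSpace ℝ (Fin n) →ₗ[ℝ] EuclideanSpace ℝ (Fin n))
  set A : EuclideanSpace ℝ (Fin n) →ₗ[ℝ] EuclideanSpace ℝ (Fin n) :=
    (ContinuousLinearMap.adjoint (T : EuclideanSpace ℝ (Fin n) →L[ℝ] EuclideanSpace ℝ (Fin n)) :)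
  have hd : d ≠ 0 := T.toLinearEquiv.isUnit_det'.ne_zero
  have hdetA : LinearMap.det A = d := (LinearMap.det_adjoint _).trans (star_trivial _)
  set F : EuclideanSpace ℝ (Fin n) → ℝ := fun x => |g x| ^ ((n : ℝ) / p)
  have hFm : Measurable F :=
    (measurable_of_measurable_on_compl_singleton 0 hgc.domRestrict.measurable).abs.pow_const _
  have hFhom : ∀ c : ℝ, 0 < c → ∀ x,
      F (c • x) = (c ^ finrank ℝ (EuclideanSpace ℝ (Fin n)))⁻¹ * F x := by
    rw [finrank_euclideanSpace_fin]
    exact fun c hc => abs_rpow_div_of_homogeneous hp.ne' hghom n hc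
  calc _ = ∫ θ : sphere (0 : EuclideanSpace ℝ (Fin n)) 1, |d| ^ ((n : ℝ) / p) * F (A θ)
          ∂(volume : Measure (EuclideanSpace ℝ (Fin n))).toSphere := by
        simp only [F, abs_mul, mul_rpow (abs_nonneg _) (abs_nonneg _)]
        rfl
    _ = |d| ^ ((n : ℝ) / p) * (|d|⁻¹ * ∫ θ : sphere (0 : EuclideanSpace ℝ (Fin n)) 1, F θ
          ∂(volume : Measure (EuclideanSpace ℝ (Fin n))).toSphere) := by
        rw [integral_const_mul, integral_toSphere_comp_of_homogeneous _ hFm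
          (fun _ => by positivity) hFhom (hdetA ▸ hd), hdetA]
    _ = _ := by
        rw [rpow_sub_one (abs_ne_zero.2 hd)]
        ring

/-- Linear invariance of the quantity `∫_{S^{n−1}} |(‖·‖_K^{−n+p})^∧(θ)|^{n/p} dθ`.
Since the distributional Fourier transform of `‖·‖_K^{−n+p}` is not available in Mathlib,
it is modelled by a function `g`, continuous and even on `ℝⁿ \ {0}` and positively
homogeneous of degree `−p` (these are precisely the properties of that Fourier transform).
The Fourier transform of `‖·‖_{TK}^{−n+p} = (‖·‖_K^{−n+p}) ∘ T⁻¹` is then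
`|det T| · g ∘ Tᵗ`, and the claim is
`∫_{S^{n−1}} ||det T| · g(Tᵗθ)|^{n/p} dθ = |det T|^{n/p−1} ∫_{S^{n−1}} |g(θ)|^{n/p} dθ`. -/
theorem fourier_integral_linear_invariance (n : ℕ) (hn : 1 ≤ n) (p : ℝ)
    (hp : 0 < p) (hpn : p < n) (hpnoteven : ∀ k : ℕ, p ≠ 2 * k)
    (T : EuclideanSpace ℝ (Fin n) ≃L[ℝ] EuclideanSpace ℝ (Fin n))
    (g : EuclideanSpace ℝ (Fin n) → ℝ)
    (hgc : ContinuousOn g {(0 : EuclideanSpace ℝ (Fin n))}ᶜ)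
    (hge : ∀ x, g (-x) = g x)
    (hghom : ∀ c : ℝ, 0 < c → ∀ x, g (c • x) = c ^ (-p) * g x) :
    ∫ θ : Metric.sphere (0 : EuclideanSpace ℝ (Fin n)) 1,
        |LinearMap.det ((T : EuclideanSpace ℝ (Fin n) →L[ℝ] EuclideanSpace ℝ (Fin n)) :
            EuclideanSpace ℝ (Fin n) →ₗ[ℝ] EuclideanSpace ℝ (Fin n)) *
          g ((ContinuousLinearMap.adjoint
              (T : EuclideanSpace ℝ (Fin n) →L[ℝ] EuclideanSpace ℝ (Fin n)))
            (θ : EuclideanSpace ℝ (Fin n)))| ^ ((n : ℝ) / p)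
      ∂((volume : Measure (EuclideanSpace ℝ (Fin n))).toSphere) =
    |LinearMap.det ((T : EuclideanSpace ℝ (Fin n) →L[ℝ] EuclideanSpace ℝ (Fin n)) :
        EuclideanSpace ℝ (Fin n) →ₗ[ℝ] EuclideanSpace ℝ (Fin n))| ^ ((n : ℝ) / p - 1) *
      ∫ θ : Metric.sphere (0 : EuclideanSpace ℝ (Fin n)) 1,
        |g (θ : EuclideanSpace ℝ (Fin n))| ^ ((n : ℝ) / p)
      ∂((volume : Measure (EuclideanSpace ℝ (Fin n))).toSphere) :=
  fourier_integral_linear_invariance_general n p hp T g hgc hghom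
end

section
/- Let 0 < p < n/2 and let I_p : L²_even(S^{n−1}) → L²_even(S^{n−1}) be the linear operator acting on spherical harmonics H_m of even degree m by I_p H_m = λ_m(n,p) H_m, where λ_m(n,p) = Γ((n−p)/2)Γ((m+p)/2)/(Γ(p/2)Γ((m+n−p)/2)). Then ‖I_p f‖₂ ≤ ‖f‖₂ for every even f ∈ L²(S^{n−1}), i.e., the operator norm of I_p on L²_even is at most 1 (in fact equal to 1 since λ₀ = 1). -/
open Real

lemma lam_pos_le_one (n : ℕ) (hn : 2 ≤ n) (p : ℝ) (hp : 0 < p) (hpn : p < (n : ℝ) / 2) :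
    ∀ k : ℕ, 0 ≤ Real.Gamma (((n : ℝ) - p) / 2) * Real.Gamma ((2 * (k : ℝ) + p) / 2) /
        (Real.Gamma (p / 2) * Real.Gamma ((2 * (k : ℝ) + (n : ℝ) - p) / 2)) ∧
      Real.Gamma (((n : ℝ) - p) / 2) * Real.Gamma ((2 * (k : ℝ) + p) / 2) /
        (Real.Gamma (p / 2) * Real.Gamma ((2 * (k : ℝ) + (n : ℝ) - p) / 2)) ≤ 1 := by
  have hn' : p < (n : ℝ) - p := by linarith
  have hnp : 0 < ((n : ℝ) - p) / 2 := by linarith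
  have hG1 : 0 < Real.Gamma (((n : ℝ) - p) / 2) := Real.Gamma_pos_of_pos hnp
  have hGp : 0 < Real.Gamma (p / 2) := Real.Gamma_pos_of_pos (by linarith)
  intro k
  induction k with
  | zero =>
      have h1 : (2 * ((0:ℕ) : ℝ) + p) / 2 = p / 2 := by push_cast; ring
      have h2 : (2 * ((0:ℕ) : ℝ) + (n : ℝ) - p) / 2 = ((n : ℝ) - p) / 2 := by push_cast; ring
      rw [h1, h2]
      constructor
      · positivity
      · rw [div_le_one (by positivity)]
        ring_nf
        exact le_refl _
  | succ k ih =>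
      have hkp : 0 < (2 * (k : ℝ) + p) / 2 := by positivity
      have hknp : 0 < (2 * (k : ℝ) + (n : ℝ) - p) / 2 := by
        have : (0:ℝ) ≤ 2 * (k : ℝ) := by positivity
        linarith
      have hGkp : 0 < Real.Gamma ((2 * (k : ℝ) + p) / 2) := Real.Gamma_pos_of_pos hkp
      have hGknp : 0 < Real.Gamma ((2 * (k : ℝ) + (n : ℝ) - p) / 2) :=
        Real.Gamma_pos_of_pos hknp
      have e1 : (2 * ((k + 1 : ℕ) : ℝ) + p) / 2 = (2 * (k : ℝ) + p) / 2 + 1 := by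
        push_cast; ring
      have e2 : (2 * ((k + 1 : ℕ) : ℝ) + (n : ℝ) - p) / 2
          = (2 * (k : ℝ) + (n : ℝ) - p) / 2 + 1 := by push_cast; ring
      rw [e1, e2, Real.Gamma_add_one (ne_of_gt hkp), Real.Gamma_add_one (ne_of_gt hknp)]
      set A := Real.Gamma (((n : ℝ) - p) / 2)
      set B := Real.Gamma ((2 * (k : ℝ) + p) / 2)
      set C := Real.Gamma (p / 2)
      set D := Real.Gamma ((2 * (k : ℝ) + (n : ℝ) - p) / 2)
      have key : A * ((2 * (k : ℝ) + p) / 2 * B) / (C * ((2 * (k : ℝ) + (n : ℝ) - p) / 2 * D))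
          = (A * B / (C * D)) * (((2 * (k : ℝ) + p) / 2) / ((2 * (k : ℝ) + (n : ℝ) - p) / 2)) := by
        field_simp
      rw [key]
      have hratio : ((2 * (k : ℝ) + p) / 2) / ((2 * (k : ℝ) + (n : ℝ) - p) / 2) ≤ 1 := by
        rw [div_le_one hknp]
        linarith
      have hratio0 : 0 ≤ ((2 * (k : ℝ) + p) / 2) / ((2 * (k : ℝ) + (n : ℝ) - p) / 2) :=
        le_of_lt (div_pos hkp hknp)
      constructor
      · exact mul_nonneg ih.1 hratio0
      · calc (A * B / (C * D)) * _ ≤ (A * B / (C * D)) * 1 :=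
              mul_le_mul_of_nonneg_left hratio ih.1
          _ = A * B / (C * D) := mul_one _
          _ ≤ 1 := ih.2

/-- The operator `I_p` (`0 < p < n/2`) acts diagonally on the spherical harmonic expansion
of an even `L²` function with eigenvalues `λ_m(n,p)`. Writing `c m = ‖H_m‖₂` for the norms
of the spherical harmonic components (`c m = 0` for odd `m`, since `f` is even), the bound
`‖I_p f‖₂ ≤ ‖f‖₂` reads `∑_m λ_m(n,p)² c_m² ≤ ∑_m c_m²`. -/
theorem Ip_L2_contraction (n : ℕ) (hn : 2 ≤ n) (p : ℝ) (hp : 0 < p) (hpn : p < (n : ℝ) / 2)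
    (c : ℕ → ℝ) (hceven : ∀ m : ℕ, ¬Even m → c m = 0)
    (hsum : Summable fun m : ℕ => c m ^ 2) :
    ∑' m : ℕ,
        (Real.Gamma (((n : ℝ) - p) / 2) * Real.Gamma (((m : ℝ) + p) / 2) /
            (Real.Gamma (p / 2) * Real.Gamma (((m : ℝ) + (n : ℝ) - p) / 2)) * c m) ^ 2 ≤
      ∑' m : ℕ, c m ^ 2 := by
  have hterm : ∀ m : ℕ,
      (Real.Gamma (((n : ℝ) - p) / 2) * Real.Gamma (((m : ℝ) + p) / 2) /
          (Real.Gamma (p / 2) * Real.Gamma (((m : ℝ) + (n : ℝ) - p) / 2)) * c m) ^ 2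
        ≤ c m ^ 2 := by
    intro m
    by_cases hm : Even m
    · obtain ⟨k, hk⟩ := hm
      have hmk : (m : ℝ) = 2 * (k : ℝ) := by rw [hk]; push_cast; ring
      rw [hmk]
      obtain ⟨h0, h1⟩ := lam_pos_le_one n hn p hp hpn k
      rw [mul_pow]
      have habs : (Real.Gamma (((n : ℝ) - p) / 2) * Real.Gamma ((2 * (k : ℝ) + p) / 2) /
          (Real.Gamma (p / 2) * Real.Gamma ((2 * (k : ℝ) + (n : ℝ) - p) / 2))) ^ 2 ≤ 1 := by
        nlinarith
      nlinarith [sq_nonneg (c m)]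
    · rw [hceven m hm]
      simp
  refine Summable.tsum_le_tsum hterm ?_ hsum
  exact Summable.of_nonneg_of_le (fun m => sq_nonneg _) hterm hsum
end

section
/- Let n ≥ 2, 0 < p < n/2 real, and f an even continuous function on S^{n−1} with spherical harmonic expansion f = Σ_{m even} H_m satisfying ‖H₂‖₂ ≤ δ‖f‖₂ and ∫ f dσ = 0 (no degree-0 term). Define I_p f = Σ_{m even} λ_m(n,p) H_m with λ_m(n,p) = Γ((n−p)/2)Γ((m+p)/2)/(Γ(p/2)Γ((m+n−p)/2)). Then (n(n−p)/(2p²))·‖I_p f‖₂² ≤ (n(n−p)/(2p²))·(λ₂(n,p)² − λ₄(n,p)²)·δ²‖f‖₂² + (n/(2(n−p)))·((p+2)²/(n−p+2)²)·‖f‖₂². -/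
/-!
The multipliers satisfy `λ_{m+2} = (m+p)/(m+n-p) · λ_m` by `Γ(x+1) = xΓ(x)`, and the ratio
is at most `1` because `2p ≤ n`, so `λ_m` decreases along even `m`. Since `f` is even with no
constant term, every component other than `H₂` has degree `≥ 4` and is damped by at least `λ₄`,
while `H₂` is controlled by `δ`. Finally `λ₂ = p/(n-p)` and `λ₄ = (p+2)/(n-p+2) · λ₂` turn
`n(n-p)/(2p²) · λ₄²` into the constant of the second term.
-/

open Real

/-- `λ_m(n,p)`, the multiplier of `I_p` on spherical harmonics of degree `m`. -/
noncomputable def rieszMultiplier (n p : ℝ) (m : ℕ) : ℝ :=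
  Gamma ((n - p) / 2) * Gamma ((m + p) / 2) / (Gamma (p / 2) * Gamma ((m + n - p) / 2))

namespace rieszMultiplier

variable {n p : ℝ}

theorem pos (hp : 0 < p) (hpn : p < n) (m : ℕ) : 0 < rieszMultiplier n p m := by
  have hm : (0 : ℝ) ≤ m := m.cast_nonneg
  unfold rieszMultiplier
  have := Gamma_pos_of_pos (show 0 < (n - p) / 2 by linarith)
  have := Gamma_pos_of_pos (show 0 < (m + p) / 2 by positivity)
  have := Gamma_pos_of_pos (show 0 < p / 2 by positivity)
  have := Gamma_pos_of_pos (show 0 < (m + n - p) / 2 by linarith)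
  positivity

theorem zero (hp : 0 < p) (hpn : p < n) : rieszMultiplier n p 0 = 1 := by
  have h₁ := (Gamma_pos_of_pos (show 0 < p / 2 by positivity)).ne'
  have h₂ := (Gamma_pos_of_pos (show 0 < (n - p) / 2 by linarith)).ne'
  simp only [rieszMultiplier, Nat.cast_zero, zero_add]
  field_simp

theorem add_two (hp : 0 < p) (hpn : p < n) (m : ℕ) :
    rieszMultiplier n p (m + 2) = (m + p) / (m + n - p) * rieszMultiplier n p m := by
  have hm : (0 : ℝ) ≤ m := m.cast_nonneg
  have h₁ : ((m + 2 : ℕ) + p) / 2 = (m + p) / 2 + 1 := by push_cast; ring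
  have h₂ : ((m + 2 : ℕ) + n - p) / 2 = (m + n - p) / 2 + 1 := by push_cast; ring
  rw [rieszMultiplier, rieszMultiplier, h₁, h₂,
    Gamma_add_one (show (m + p) / 2 ≠ 0 by positivity),
    Gamma_add_one (show (m + n - p) / 2 ≠ 0 by linarith),
    ← div_div_div_cancel_right₀ two_ne_zero (m + p) (m + n - p)]
  generalize (m + p) / 2 = x, (m + n - p) / 2 = y
  ring

theorem two (hp : 0 < p) (hpn : p < n) : rieszMultiplier n p 2 = p / (n - p) := by
  simpa [zero hp hpn] using add_two hp hpn 0

theorem four (hp : 0 < p) (hpn : p < n) :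
    rieszMultiplier n p 4 = (p + 2) / (n - p + 2) * (p / (n - p)) := by
  rw [add_two hp hpn 2, two hp hpn]
  push_cast
  ring

theorem add_two_le (hp : 0 < p) (hpn : 2 * p ≤ n) (m : ℕ) :
    rieszMultiplier n p (m + 2) ≤ rieszMultiplier n p m := by
  have hm : (0 : ℝ) ≤ m := m.cast_nonneg
  rw [add_two hp (by linarith)]
  refine mul_le_of_le_one_left (pos hp (by linarith) m).le ?_
  exact (div_le_one (by linarith)).mpr (by linarith)

theorem sq_add_two_le (hp : 0 < p) (hpn : 2 * p ≤ n) (m : ℕ) :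
    rieszMultiplier n p (m + 2) ^ 2 ≤ rieszMultiplier n p m ^ 2 :=
  pow_le_pow_left₀ (pos hp (by linarith) _).le (add_two_le hp hpn m) 2

theorem add_two_mul_le (hp : 0 < p) (hpn : 2 * p ≤ n) (m k : ℕ) :
    rieszMultiplier n p (m + 2 * k) ≤ rieszMultiplier n p m := by
  induction k with
  | zero => simp
  | succ k ih => exact (add_two_le hp hpn (m + 2 * k)).trans ih

theorem le_four_of_even (hp : 0 < p) (hpn : 2 * p ≤ n) {m : ℕ} (hm : Even m) (h4 : 4 ≤ m) :
    rieszMultiplier n p m ≤ rieszMultiplier n p 4 := by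
  obtain ⟨k, rfl⟩ : ∃ k, m = 4 + 2 * k := ⟨(m - 4) / 2, by obtain ⟨j, rfl⟩ := hm; omega⟩
  exact add_two_mul_le hp hpn 4 k

theorem mul_four_sq (hp : 0 < p) (hpn : p < n) :
    n * (n - p) / (2 * p ^ 2) * rieszMultiplier n p 4 ^ 2 =
      n / (2 * (n - p)) * ((p + 2) ^ 2 / (n - p + 2) ^ 2) := by
  have : n - p ≠ 0 := by linarith
  have : n - p + 2 ≠ 0 := by linarith
  rw [four hp hpn]
  field_simp

theorem mul_sq_le_four_sq_mul_sq (hp : 0 < p) (hpn : 2 * p ≤ n) {c : ℕ → ℝ}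
    (hceven : ∀ m, ¬Even m → c m = 0) (hc0 : c 0 = 0) {m : ℕ} (hm2 : m ≠ 2) :
    (rieszMultiplier n p m * c m) ^ 2 ≤ rieszMultiplier n p 4 ^ 2 * c m ^ 2 := by
  by_cases heven : Even m
  · rcases eq_or_ne m 0 with rfl | hm0
    · simp [hc0]
    have h4 : 4 ≤ m := by obtain ⟨k, rfl⟩ := heven; omega
    rw [mul_pow]
    gcongr
    · exact (pos hp (by linarith) m).le
    · exact le_four_of_even hp hpn heven h4
  · simp [hceven m heven]

end rieszMultiplier

theorem tsum_mul_sq_le_add_sq {ι : Type*} {c w : ι → ℝ} (j : ι) {B : ℝ}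
    (hc : Summable fun i => c i ^ 2) (hw : ∀ i ≠ j, (w i * c i) ^ 2 ≤ B * c i ^ 2) :
    ∑' i, (w i * c i) ^ 2 ≤ B * ∑' i, c i ^ 2 + (w j ^ 2 - B) * c j ^ 2 := by
  classical
  set d : ι → ℝ := fun i => if i = j then (w j ^ 2 - B) * c j ^ 2 else 0
  have hd : HasSum d ((w j ^ 2 - B) * c j ^ 2) := hasSum_ite_eq j _
  have hbound : ∀ i, (w i * c i) ^ 2 ≤ B * c i ^ 2 + d i := by
    intro i
    by_cases hi : i = j
    · subst hi
      simp only [d, if_pos]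
      exact le_of_eq (by ring)
    · simpa [d, hi] using hw i hi
  have hdom := (hc.hasSum.mul_left B).add hd
  exact hasSum_le hbound
    (Summable.of_nonneg_of_le (fun _ => sq_nonneg _) hbound hdom.summable).hasSum hdom

theorem Ip_spectral_gap_general (n : ℕ) (p : ℝ) (hp : 0 < p) (hpn : p < (n : ℝ) / 2)
    (lam : ℕ → ℝ)
    (hlam : ∀ m : ℕ, lam m =
      Real.Gamma (((n : ℝ) - p) / 2) * Real.Gamma (((m : ℝ) + p) / 2) /
        (Real.Gamma (p / 2) * Real.Gamma (((m : ℝ) + (n : ℝ) - p) / 2)))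
    (c : ℕ → ℝ) (hcnonneg : ∀ m, 0 ≤ c m) (hceven : ∀ m : ℕ, ¬Even m → c m = 0)
    (hc0 : c 0 = 0) (hsum : Summable fun m : ℕ => c m ^ 2)
    (δ : ℝ) (h2 : c 2 ≤ δ * Real.sqrt (∑' m : ℕ, c m ^ 2)) :
    (n : ℝ) * ((n : ℝ) - p) / (2 * p ^ 2) * ∑' m : ℕ, (lam m * c m) ^ 2 ≤
      (n : ℝ) * ((n : ℝ) - p) / (2 * p ^ 2) * (lam 2 ^ 2 - lam 4 ^ 2) * δ ^ 2 *
          (∑' m : ℕ, c m ^ 2) +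
        (n : ℝ) / (2 * ((n : ℝ) - p)) * ((p + 2) ^ 2 / ((n : ℝ) - p + 2) ^ 2) *
          (∑' m : ℕ, c m ^ 2) := by
  obtain rfl : lam = rieszMultiplier n p := funext hlam
  have h2p : 2 * p ≤ n := by linarith
  set S := ∑' m : ℕ, c m ^ 2
  have hc2 : c 2 ^ 2 ≤ δ ^ 2 * S := by
    have := pow_le_pow_left₀ (hcnonneg 2) h2 2
    rwa [mul_pow, Real.sq_sqrt (tsum_nonneg fun m => sq_nonneg (c m))] at this
  have hgap := sub_nonneg.2 (rieszMultiplier.sq_add_two_le hp h2p 2)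
  have hnp : 0 ≤ (n : ℝ) - p := by linarith
  calc _ ≤ (n : ℝ) * ((n : ℝ) - p) / (2 * p ^ 2) * (rieszMultiplier n p 4 ^ 2 * S +
        (rieszMultiplier n p 2 ^ 2 - rieszMultiplier n p 4 ^ 2) * c 2 ^ 2) := by
        gcongr
        exact tsum_mul_sq_le_add_sq 2 hsum fun m hm2 =>
          rieszMultiplier.mul_sq_le_four_sq_mul_sq hp h2p hceven hc0 hm2
    _ ≤ (n : ℝ) * ((n : ℝ) - p) / (2 * p ^ 2) * (rieszMultiplier n p 4 ^ 2 * S +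
        (rieszMultiplier n p 2 ^ 2 - rieszMultiplier n p 4 ^ 2) * (δ ^ 2 * S)) := by
        gcongr
    _ = _ := by
        rw [← rieszMultiplier.mul_four_sq hp (by linarith)]
        ring

/-- Spectral-gap estimate for `I_p`, `0 < p < n/2`. Writing `c m = ‖H_m‖₂` for the norms of
the spherical harmonic components of the even function `f` (so `c m = 0` for odd `m`,
`c 0 = 0` since `∫ f dσ = 0`, `‖f‖₂² = ∑ c_m²`, `‖I_p f‖₂² = ∑ λ_m(n,p)² c_m²`), if
`‖H₂‖₂ ≤ δ ‖f‖₂`, then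
`(n(n−p)/(2p²)) ‖I_p f‖₂² ≤ (n(n−p)/(2p²))(λ₂²−λ₄²) δ² ‖f‖₂²
  + (n/(2(n−p))) ((p+2)²/(n−p+2)²) ‖f‖₂²`. -/
theorem Ip_spectral_gap (n : ℕ) (hn : 2 ≤ n) (p : ℝ) (hp : 0 < p) (hpn : p < (n : ℝ) / 2)
    (lam : ℕ → ℝ)
    (hlam : ∀ m : ℕ, lam m =
      Real.Gamma (((n : ℝ) - p) / 2) * Real.Gamma (((m : ℝ) + p) / 2) /
        (Real.Gamma (p / 2) * Real.Gamma (((m : ℝ) + (n : ℝ) - p) / 2)))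
    (c : ℕ → ℝ) (hcnonneg : ∀ m, 0 ≤ c m) (hceven : ∀ m : ℕ, ¬Even m → c m = 0)
    (hc0 : c 0 = 0) (hsum : Summable fun m : ℕ => c m ^ 2)
    (δ : ℝ) (hδ : 0 ≤ δ) (h2 : c 2 ≤ δ * Real.sqrt (∑' m : ℕ, c m ^ 2)) :
    (n : ℝ) * ((n : ℝ) - p) / (2 * p ^ 2) * ∑' m : ℕ, (lam m * c m) ^ 2 ≤
      (n : ℝ) * ((n : ℝ) - p) / (2 * p ^ 2) * (lam 2 ^ 2 - lam 4 ^ 2) * δ ^ 2 *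
          (∑' m : ℕ, c m ^ 2) +
        (n : ℝ) / (2 * ((n : ℝ) - p)) * ((p + 2) ^ 2 / ((n : ℝ) - p + 2) ^ 2) *
          (∑' m : ℕ, c m ^ 2) :=
  Ip_spectral_gap_general n p hp hpn lam hlam c hcnonneg hceven hc0 hsum δ h2
end
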